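/- Ordering of semantic relative entropies: D_s(p‖q_s) ≤ D_s(p_s‖q_s) ≤ D_s(p_s‖q), where D_s(p‖q_s) = ∑_i ∑_{u∈U_i} p(u) log(p(u)/P_q(U_i)) and D_s(p_s‖q) = ∑_i ∑_{u∈U_i} p(u) log(P_p(U_i)/q(u)). -/

import Mathlib

open Finset

/-- Probability of the block of index `i` under the partition induced by `blk`. -/
noncomputable def blockProb {U B : Type*} [Fintype U] [DecidableEq B]
    (p : U → ℝ) (blk : U → B) (i : B) : ℝ :=
  ∑ u : U, if blk u = i then p u else 0

/-- Full semantic relative entropy `D_s(p_s‖q_s)`. -/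
noncomputable def semRelEntropyFull {U B : Type*} [Fintype U] [Fintype B] [DecidableEq B]
    (p q : U → ℝ) (blk : U → B) : ℝ :=
  ∑ i : B, blockProb p blk i * Real.logb 2 (blockProb p blk i / blockProb q blk i)

/-- Partial semantic relative entropy `D_s(p_s‖q) = ∑_i ∑_{u∈U_i} p(u) log(P_p(U_i)/q(u))`. -/
noncomputable def semRelEntropyLeft {U B : Type*} [Fintype U] [Fintype B] [DecidableEq B]
    (p q : U → ℝ) (blk : U → B) : ℝ :=
  ∑ u : U, p u * Real.logb 2 (blockProb p blk (blk u) / q u)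

/-- Partial semantic relative entropy `D_s(p‖q_s) = ∑_i ∑_{u∈U_i} p(u) log(p(u)/P_q(U_i))`. -/
noncomputable def semRelEntropyRight {U B : Type*} [Fintype U] [Fintype B] [DecidableEq B]
    (p q : U → ℝ) (blk : U → B) : ℝ :=
  ∑ u : U, p u * Real.logb 2 (p u / blockProb q blk (blk u))

/-!
Writing `D_s(p_s‖q_s)` as a sum over `u` as well, all three entropies have the form
`∑ u, p u * log (x u / y u)`, and they compare termwise: `p u ≤ P_p(U_i)` and `q u ≤ P_q(U_i)`
for `u ∈ U_i`, and `log` is monotone.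
-/

lemma le_blockProb {U B : Type*} [Fintype U] [DecidableEq B]
    (p : U → ℝ) (blk : U → B) (hp : ∀ u, 0 ≤ p u) (u : U) :
    p u ≤ blockProb p blk (blk u) := by
  rw [blockProb, ← sum_filter]
  exact single_le_sum (fun v _ => hp v) (mem_filter.mpr ⟨mem_univ u, rfl⟩)

lemma sum_blockProb_mul {U B : Type*} [Fintype U] [Fintype B] [DecidableEq B]
    (p : U → ℝ) (blk : U → B) (f : B → ℝ) :
    ∑ i, blockProb p blk i * f i = ∑ u, p u * f (blk u) := by
  simp_rw [blockProb, ← sum_filter, sum_mul]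
  rw [← sum_fiberwise univ blk fun u => p u * f (blk u)]
  refine sum_congr rfl fun i _ => sum_congr rfl fun u hu => ?_
  rw [(mem_filter.mp hu).2]

lemma mul_logb_le_mul_logb {b a x y : ℝ} (hb : 1 < b) (ha : 0 ≤ a) (hx : 0 < a → 0 < x)
    (hxy : x ≤ y) : a * Real.logb b x ≤ a * Real.logb b y := by
  rcases ha.eq_or_lt with rfl | ha
  · simp
  · exact mul_le_mul_of_nonneg_left (Real.logb_le_logb_of_le hb (hx ha) hxy) ha.le

theorem semRelEntropy_ordering_general {U B : Type*} [Fintype U] [Fintype B] [DecidableEq B]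
    (p q : U → ℝ) (blk : U → B)
    (hp : ∀ u, 0 ≤ p u)
    (hq : ∀ u, 0 < q u) :
    semRelEntropyRight p q blk ≤ semRelEntropyFull p q blk ∧
      semRelEntropyFull p q blk ≤ semRelEntropyLeft p q blk := by
  have hpP := le_blockProb p blk hp
  have hqP := le_blockProb q blk fun u => (hq u).le
  have hqP_pos u : 0 < blockProb q blk (blk u) := (hq u).trans_le (hqP u)
  rw [semRelEntropyFull, sum_blockProb_mul]
  constructor <;> refine sum_le_sum fun u _ => mul_logb_le_mul_logb one_lt_two (hp u) ?_ ?_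
  · exact fun h => div_pos h (hqP_pos u)
  · exact div_le_div_of_nonneg_right (hpP u) (hqP_pos u).le
  · exact fun h => div_pos (h.trans_le (hpP u)) (hqP_pos u)
  · exact div_le_div_of_nonneg_left ((hp u).trans (hpP u)) (hq u) (hqP u)

/-- Ordering of semantic relative entropies: `D_s(p‖q_s) ≤ D_s(p_s‖q_s) ≤ D_s(p_s‖q)`. -/
theorem semRelEntropy_ordering {U B : Type*} [Fintype U] [Fintype B] [DecidableEq B]
    (p q : U → ℝ) (blk : U → B)
    (hp : ∀ u, 0 ≤ p u) (hpsum : ∑ u, p u = 1)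
    (hq : ∀ u, 0 < q u) (hqsum : ∑ u, q u = 1) :
    semRelEntropyRight p q blk ≤ semRelEntropyFull p q blk ∧
      semRelEntropyFull p q blk ≤ semRelEntropyLeft p q blk :=
  semRelEntropy_ordering_general p q blk hp hq
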